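/- Suppose p ∈ [1,∞), Q : D → [0,∞) is continuous, and γ ∈ [0,1] is a constant such that for every ξ ∈ D, all continuous inputs u, w : [0,∞) → D, and every solution x of the single-component system with inputs u, w and x(0) = ξ, one has ‖h∘x‖_{[0,t],p} ≤ γ‖h∘u‖_{[0,t],p} + Q(ξ) for all t ≥ 0. Then for every n ∈ ℕ, all continuous inputs u, w : [0,∞) → D, every ξ = (ξ_1,…,ξ_n) ∈ D^n, and every solution (x_1,…,x_n) of the string (Σ_n) with these inputs and initial condition ξ, the estimate ‖h∘x_i‖_{[0,t],p} ≤ γ‖h∘u‖_{[0,t],p} + Σ_{j=1}^{n} Q(ξ_j) holds for all t ≥ 0 and all i = 1,…,n. -/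
import Mathlib


/-- The `L^p` norm of a signal `y` on the interval `[0, t]`:
`‖y‖_{[0,t],p} = (∫_0^t |y(s)|^p ds)^{1/p}`. -/
noncomputable def lpNorm {m : ℕ} (p : ℝ) (y : ℝ → EuclideanSpace ℝ (Fin m)) (t : ℝ) : ℝ :=
  (∫ s in (0:ℝ)..t, ‖y s‖ ^ p) ^ (1 / p)

/-- Theorem 2: component-wise trajectory-based sufficient conditions for `L^p`
string stability of an essentially one-directional string (`δ = 0`, `γ ≤ 1`). -/
theorem string_stability_one_directional {k m : ℕ}
    (D : Set (EuclideanSpace ℝ (Fin k))) (hDopen : IsOpen D) (hD0 : (0 : EuclideanSpace ℝ (Fin k)) ∈ D)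
    (h : EuclideanSpace ℝ (Fin k) → EuclideanSpace ℝ (Fin m))
    (hhcont : ContinuousOn h D) (hh0 : h 0 = 0)
    (f : EuclideanSpace ℝ (Fin k) → EuclideanSpace ℝ (Fin k) → EuclideanSpace ℝ (Fin k) →
      EuclideanSpace ℝ (Fin k))
    (hf : LocallyLipschitzOn (D ×ˢ D ×ˢ D)
      (fun q : EuclideanSpace ℝ (Fin k) × EuclideanSpace ℝ (Fin k) × EuclideanSpace ℝ (Fin k) =>
        f q.1 q.2.1 q.2.2))
    (p : ℝ) (hp : 1 ≤ p)
    (Q : EuclideanSpace ℝ (Fin k) → ℝ) (hQcont : ContinuousOn Q D) (hQ0 : ∀ ξ ∈ D, 0 ≤ Q ξ)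
    (γ : ℝ) (hγ : 0 ≤ γ) (hγ1 : γ ≤ 1)
    -- the single-component trajectory estimate (3.2) with δ = 0
    (Hcomp : ∀ ξ ∈ D, ∀ u w : ℝ → EuclideanSpace ℝ (Fin k),
      ContinuousOn u (Set.Ici 0) → ContinuousOn w (Set.Ici 0) →
      (∀ t ≥ (0:ℝ), u t ∈ D) → (∀ t ≥ (0:ℝ), w t ∈ D) →
      ∀ x : ℝ → EuclideanSpace ℝ (Fin k),
        (∀ t ≥ (0:ℝ), x t ∈ D) → x 0 = ξ →
        (∀ t ≥ (0:ℝ), HasDerivAt x (f (u t) (x t) (w t)) t) →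
        ∀ t ≥ (0:ℝ),
          lpNorm p (fun s => h (x s)) t ≤
            γ * lpNorm p (fun s => h (u s)) t + Q ξ) :
    -- conclusion: the string estimate (2.2) with the explicit gains of Theorem 2
    ∀ n : ℕ, ∀ u w : ℝ → EuclideanSpace ℝ (Fin k),
      ContinuousOn u (Set.Ici 0) → ContinuousOn w (Set.Ici 0) →
      (∀ t ≥ (0:ℝ), u t ∈ D) → (∀ t ≥ (0:ℝ), w t ∈ D) →
      ∀ ξ : ℕ → EuclideanSpace ℝ (Fin k), (∀ i, 1 ≤ i → i ≤ n → ξ i ∈ D) →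
      ∀ x : ℕ → ℝ → EuclideanSpace ℝ (Fin k),
        (∀ t, x 0 t = u t) → (∀ t, x (n + 1) t = w t) →
        (∀ i, 1 ≤ i → i ≤ n →
          (∀ t ≥ (0:ℝ), x i t ∈ D) ∧ x i 0 = ξ i ∧
          (∀ t ≥ (0:ℝ), HasDerivAt (x i) (f (x (i - 1) t) (x i t) (x (i + 1) t)) t)) →
        ∀ i, 1 ≤ i → i ≤ n → ∀ t ≥ (0:ℝ),
          lpNorm p (fun s => h (x i s)) t ≤
            γ * lpNorm p (fun s => h (u s)) t +
            ∑ j ∈ Finset.Icc 1 n, Q (ξ j) := by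
  intro n u w hu hw huD hwD ξ hξ x hx0 hxn hxsys
  have hlpnn : ∀ (y : ℝ → EuclideanSpace ℝ (Fin m)) (t : ℝ), 0 ≤ t → 0 ≤ lpNorm p y t := by
    intro y t ht
    exact Real.rpow_nonneg (intervalIntegral.integral_nonneg ht
      (fun s _ => Real.rpow_nonneg (norm_nonneg _) p)) _
  -- neighbors: continuity and membership for all indices up to n+1
  have nb : ∀ j ≤ n + 1, ContinuousOn (x j) (Set.Ici 0) ∧ ∀ t ≥ (0:ℝ), x j t ∈ D := by
    intro j hj
    rcases Nat.eq_zero_or_pos j with h0 | h1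
    · subst h0
      rw [show x 0 = u from funext hx0]
      exact ⟨hu, huD⟩
    rcases eq_or_lt_of_le hj with heq | hlt
    · subst heq
      rw [show x (n + 1) = w from funext hxn]
      exact ⟨hw, hwD⟩
    · obtain ⟨hD, _, hder⟩ := hxsys j h1 (Nat.lt_succ_iff.mp hlt)
      exact ⟨fun t ht => ((hder t ht).continuousAt).continuousWithinAt, hD⟩
  have key : ∀ i, 1 ≤ i → i ≤ n → ∀ t ≥ (0:ℝ),
      lpNorm p (fun s => h (x i s)) t ≤
        γ * lpNorm p (fun s => h (u s)) t + ∑ j ∈ Finset.Icc 1 i, Q (ξ j) := by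
    intro i hi
    induction i, hi using Nat.le_induction with
    | base =>
      intro h1n t ht
      obtain ⟨hD, hx00, hder⟩ := hxsys 1 le_rfl h1n
      obtain ⟨hcprev, hDprev⟩ := nb 0 (Nat.zero_le _)
      obtain ⟨hcnext, hDnext⟩ := nb 2 (by omega)
      have := Hcomp (ξ 1) (hξ 1 le_rfl h1n) (x 0) (x 2) hcprev hcnext hDprev hDnext
        (x 1) hD hx00 hder t ht
      simpa [hx0] using this
    | succ i hi ih =>
      intro hin t ht
      have hin' : i ≤ n := by omega
      obtain ⟨hD, hxi0, hder⟩ := hxsys (i + 1) (by omega) hin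
      obtain ⟨hcprev, hDprev⟩ := nb i (by omega)
      obtain ⟨hcnext, hDnext⟩ := nb (i + 2) (by omega)
      have hstep := Hcomp (ξ (i + 1)) (hξ (i + 1) (by omega) hin) (x i) (x (i + 2))
        hcprev hcnext hDprev hDnext (x (i + 1)) hD hxi0
        (by simpa using hder) t ht
      have hIH := ih hin' t ht
      have hSnn : 0 ≤ ∑ j ∈ Finset.Icc 1 i, Q (ξ j) :=
        Finset.sum_nonneg fun j hj => by
          simp only [Finset.mem_Icc] at hj
          exact hQ0 _ (hξ j hj.1 (le_trans hj.2 hin'))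
      have hLu : 0 ≤ lpNorm p (fun s => h (u s)) t := hlpnn _ t ht
      have hsum : ∑ j ∈ Finset.Icc 1 (i + 1), Q (ξ j) =
          ∑ j ∈ Finset.Icc 1 i, Q (ξ j) + Q (ξ (i + 1)) := by
        rw [← Finset.sum_Icc_succ_top (by omega)]
      rw [hsum]
      calc lpNorm p (fun s => h (x (i + 1) s)) t
          ≤ γ * lpNorm p (fun s => h (x i s)) t + Q (ξ (i + 1)) := hstep
        _ ≤ γ * (γ * lpNorm p (fun s => h (u s)) t + ∑ j ∈ Finset.Icc 1 i, Q (ξ j))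
              + Q (ξ (i + 1)) := by nlinarith [mul_le_mul_of_nonneg_left hIH hγ]
        _ ≤ γ * lpNorm p (fun s => h (u s)) t + (∑ j ∈ Finset.Icc 1 i, Q (ξ j)
              + Q (ξ (i + 1))) := by
            nlinarith [mul_nonneg (sub_nonneg.mpr hγ1) (mul_nonneg hγ hLu),
              mul_nonneg (sub_nonneg.mpr hγ1) hSnn]
  intro i h1i hin t ht
  refine le_trans (key i h1i hin t ht) ?_
  have : ∑ j ∈ Finset.Icc 1 i, Q (ξ j) ≤ ∑ j ∈ Finset.Icc 1 n, Q (ξ j) :=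
    Finset.sum_le_sum_of_subset_of_nonneg
      (Finset.Icc_subset_Icc_right hin)
      (fun j hj _ => by
        simp only [Finset.mem_Icc] at hj
        exact hQ0 _ (hξ j hj.1 hj.2))
  linarith
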